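/- arXiv:1301.5278 — 2 statements merged into one kernel-verified Lean document; each statement's English description precedes it below -/
import Mathlib

section
/- Let (R,m) be a Noetherian local ring of Krull dimension d satisfying (R1'), i.e. R_p is a field for every prime p with dim R/p = d and a discrete valuation ring for every prime p with dim R/p = d−1. Then every prime ideal p of R with dim R/p = d−1 contains exactly one minimal prime ideal q of R, and this q satisfies dim R/q = d. -/
/-! The localization `R_P` is a domain, so the kernel `q` of `R → R_P` is prime; every prime
contained in `P` contains `q`, which makes `q` the only minimal prime below `P`. Since `R_P` is
not a field, `q ≠ P`, hence `dim R/q > dim R/P = d - 1`, while `dim R/q ≤ dim R = d`. -/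

/-- `R` satisfies (R1′) (is *regular in codimension one*): the localization `R_P` is a field
for every prime `P` with `dim R/P = d`, and a discrete valuation ring for every prime `P`
with `dim R/P = d - 1`. -/
def RegularInCodimOne (R : Type*) [CommRing R] (d : ℕ) : Prop :=
  (∀ (P : Ideal R) [P.IsPrime], ringKrullDim (R ⧸ P) = (d : ℕ) →
    IsField (Localization.AtPrime P)) ∧
  (∀ (P : Ideal R) [P.IsPrime], ringKrullDim (R ⧸ P) = ((d - 1 : ℕ) : ℕ) →
    ∃ h : IsDomain (Localization.AtPrime P),
      @IsDiscreteValuationRing (Localization.AtPrime P) _ h)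

open Order

lemma ringKrullDim_quotient_eq_coheight {R : Type*} [CommRing R] (p : PrimeSpectrum R) :
    ringKrullDim (R ⧸ p.asIdeal) = coheight p := by
  have hIci : PrimeSpectrum.zeroLocus (p.asIdeal : Set R) = Set.Ici p := by
    ext x
    exact PrimeSpectrum.mem_zeroLocus _ _
  rw [ringKrullDim_quotient, coheight_eq_krullDim_Ici, hIci]

lemma Order.coheight_eq_of_lt_of_krullDim_le {α : Type*} [Preorder α] {a b : α} {n : ℕ}
    (hab : a < b) (hb : coheight b + 1 = n) (hdim : krullDim α ≤ n) : coheight a = n := by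
  refine le_antisymm ?_ (hb ▸ coheight_add_one_le hab)
  exact_mod_cast (coheight_le_krullDim a).trans hdim

section

variable {R : Type*} [CommRing R] {M : Submonoid R} {S : Type*} [CommRing S] [Algebra R S]
  [IsLocalization M S]

include M in
lemma IsLocalization.ker_algebraMap_le {p : Ideal R} [p.IsPrime] (hp : Disjoint (M : Set R) p) :
    RingHom.ker (algebraMap R S) ≤ p :=
  calc RingHom.ker (algebraMap R S) = (⊥ : Ideal S).comap (algebraMap R S) :=
        RingHom.ker_eq_comap_bot _
    _ ≤ (p.map (algebraMap R S)).comap (algebraMap R S) := Ideal.comap_mono bot_le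
    _ = p := IsLocalization.under_map_of_isPrime_disjoint M S ‹_› hp

end

namespace Localization.AtPrime

variable {R : Type*} [CommRing R] (P : Ideal R) [P.IsPrime]

lemma ker_algebraMap_le {p : Ideal R} [p.IsPrime] (hp : p ≤ P) :
    RingHom.ker (algebraMap R (Localization.AtPrime P)) ≤ p :=
  IsLocalization.ker_algebraMap_le (M := P.primeCompl) <|
    Set.disjoint_left.mpr fun _ hx hxp => hx (hp hxp)

lemma ker_algebraMap_lt_of_not_isField (h : ¬ IsField (Localization.AtPrime P)) :
    RingHom.ker (algebraMap R (Localization.AtPrime P)) < P := by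
  refine (ker_algebraMap_le P le_rfl).lt_of_ne fun hP => h ?_
  rw [IsLocalRing.isField_iff_maximalIdeal_eq, ← map_eq_maximalIdeal, eq_bot_iff,
    Ideal.map_le_iff_le_comap, ← RingHom.ker_eq_comap_bot]
  exact hP.ge

variable [IsDomain (Localization.AtPrime P)]

lemma ker_algebraMap_mem_minimalPrimes :
    RingHom.ker (algebraMap R (Localization.AtPrime P)) ∈ minimalPrimes R :=
  ⟨⟨RingHom.ker_isPrime _, bot_le⟩, fun _ hJ hJP =>
    have := hJ.1
    ker_algebraMap_le P (hJP.trans (ker_algebraMap_le P le_rfl))⟩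

lemma eq_ker_algebraMap_of_mem_minimalPrimes {q : Ideal R} (hq : q ∈ minimalPrimes R)
    (hqP : q ≤ P) : q = RingHom.ker (algebraMap R (Localization.AtPrime P)) :=
  have := hq.1.1
  le_antisymm (hq.2 (ker_algebraMap_mem_minimalPrimes P).1 (ker_algebraMap_le P hqP))
    (ker_algebraMap_le P hqP)

end Localization.AtPrime

theorem unique_minimal_prime_below_codim_one_general
    {R : Type} [CommRing R]
    (d : ℕ) (hd : ringKrullDim R = (d : ℕ)) (hR1 : RegularInCodimOne R d)
    (P : Ideal R) (hP : P.IsPrime)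
    (hPd : ringKrullDim (R ⧸ P) = ((d - 1 : ℕ) : ℕ)) :
    ∃ q ∈ minimalPrimes R, q ≤ P ∧ ringKrullDim (R ⧸ q) = (d : ℕ) ∧
      ∀ q' ∈ minimalPrimes R, q' ≤ P → q' = q := by
  obtain ⟨hField, hDVR⟩ := hR1
  obtain ⟨_, _⟩ := hDVR P hPd
  have hNotField := IsDiscreteValuationRing.not_isField (Localization.AtPrime P)
  have hd0 : d ≠ 0 := by
    -- for `d = 0` the truncated `d - 1` is `d`, so (R1′) would make `R_P` a field
    rintro rfl
    exact hNotField (hField P hPd)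
  set q := RingHom.ker (algebraMap R (Localization.AtPrime P))
  have hqP : q < P := Localization.AtPrime.ker_algebraMap_lt_of_not_isField P hNotField
  have hqMin : q ∈ minimalPrimes R := Localization.AtPrime.ker_algebraMap_mem_minimalPrimes P
  refine ⟨q, hqMin, hqP.le, ?_, fun q' hq' hq'P =>
    Localization.AtPrime.eq_ker_algebraMap_of_mem_minimalPrimes P hq' hq'P⟩
  have hcoheightP : coheight (⟨P, hP⟩ : PrimeSpectrum R) + 1 = d := by
    have h : coheight (⟨P, hP⟩ : PrimeSpectrum R) = (d - 1 : ℕ) :=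
      WithBot.coe_inj.mp ((ringKrullDim_quotient_eq_coheight ⟨P, hP⟩).symm.trans hPd)
    rw [h]
    exact_mod_cast Nat.sub_add_cancel (Nat.one_le_iff_ne_zero.mpr hd0)
  have hlt : (⟨q, hqMin.1.1⟩ : PrimeSpectrum R) < ⟨P, hP⟩ := hqP
  have hcoheightQ : coheight (⟨q, hqMin.1.1⟩ : PrimeSpectrum R) = d :=
    coheight_eq_of_lt_of_krullDim_le hlt hcoheightP hd.le
  exact (ringKrullDim_quotient_eq_coheight ⟨q, hqMin.1.1⟩).trans (by rw [hcoheightQ]; rfl)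

/-- Let `(R, m)` be a Noetherian local ring of Krull dimension `d`
satisfying (R1′).  Then every prime `P` with `dim R/P = d - 1` contains exactly one minimal
prime `q` of `R`, and this `q` satisfies `dim R/q = d`. -/
theorem unique_minimal_prime_below_codim_one
    {R : Type} [CommRing R] [IsNoetherianRing R] [IsLocalRing R]
    (d : ℕ) (hd : ringKrullDim R = (d : ℕ)) (hR1 : RegularInCodimOne R d)
    (P : Ideal R) (hP : P.IsPrime)
    (hPd : ringKrullDim (R ⧸ P) = ((d - 1 : ℕ) : ℕ)) :
    ∃ q ∈ minimalPrimes R, q ≤ P ∧ ringKrullDim (R ⧸ q) = (d : ℕ) ∧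
      ∀ q' ∈ minimalPrimes R, q' ≤ P → q' = q :=
  unique_minimal_prime_below_codim_one_general d hd hR1 P hP hPd
end

section
/- Let (R,m) be a Noetherian local ring of Krull dimension d satisfying (R1'), and let q_1, …, q_u be the minimal prime ideals of R with dim R/q_i = d. Then for every prime ideal p of R with dim R/p ≥ d−1, the localization (q_1 ∩ … ∩ q_u)_p is zero; consequently the R-module q_1 ∩ … ∩ q_u has Krull dimension at most d−2. -/
lemma WithBot.ENat.eq_or_eq_of_sub_one_le_of_le {x : WithBot ℕ∞} {d : ℕ}
    (h₁ : ((d - 1 : ℕ) : WithBot ℕ∞) ≤ x) (h₂ : x ≤ (d : WithBot ℕ∞)) :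
    x = (d : WithBot ℕ∞) ∨ x = ((d - 1 : ℕ) : WithBot ℕ∞) := by
  lift x to ℕ∞ using ne_bot_of_le_ne_bot (by simp) h₁
  lift x to ℕ using ne_top_of_le_ne_top (ENat.natCast_ne_top d) (by exact_mod_cast h₂)
  -- hide the truncated `d - 1` so that `norm_cast` does not try to push the cast into it
  generalize he : d - 1 = e at h₁ ⊢
  norm_cast at h₁ h₂ ⊢
  omega

lemma WithBot.ENat.sub_one_le_of_not_le_sub_two {x : WithBot ℕ∞} {d : ℕ}
    (h : ¬ x ≤ ((d - 2 : ℕ) : WithBot ℕ∞)) : ((d - 1 : ℕ) : WithBot ℕ∞) ≤ x := by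
  rw [not_le] at h
  lift x to ℕ∞ using ne_bot_of_gt h
  induction x using ENat.recTopCoe with
  | top => exact_mod_cast le_top
  | coe x =>
    generalize he : d - 1 = e at h ⊢
    generalize hf : d - 2 = f at h ⊢
    norm_cast at h ⊢
    omega

section

variable {R : Type*} [CommRing R]

lemma ringKrullDim_quotient_anti {Q P : Ideal R} (h : Q ≤ P) :
    ringKrullDim (R ⧸ P) ≤ ringKrullDim (R ⧸ Q) :=
  ringKrullDim_le_of_surjective _ (Ideal.Quotient.factor_surjective h)

lemma ker_algebraMap_localization_mem_minimalPrimes (P : Ideal R) [P.IsPrime]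
    [IsDomain (Localization.AtPrime P)] :
    RingHom.ker (algebraMap R (Localization.AtPrime P)) ∈ minimalPrimes R := by
  have h := IsLocalization.minimalPrimes_map P.primeCompl (Localization.AtPrime P) ⊥
  rw [Ideal.map_bot] at h
  have hbot : ⊥ ∈ minimalPrimes (Localization.AtPrime P) := by
    rw [IsDomain.minimalPrimes_eq_singleton_bot]
    rfl
  rw [RingHom.ker_eq_comap_bot]
  exact h.le hbot

lemma not_isDiscreteValuationRing_localization_of_mem_minimalPrimes (Q : Ideal R) [Q.IsPrime]
    (hQ : Q ∈ minimalPrimes R) [IsDomain (Localization.AtPrime Q)] :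
    ¬ IsDiscreteValuationRing (Localization.AtPrime Q) := by
  intro hdvr
  have := IsLocalization.subsingleton_primeSpectrum_of_mem_minimalPrimes Q hQ
    (Localization.AtPrime Q)
  exact hdvr.not_a_field' <| congrArg PrimeSpectrum.asIdeal <|
    Subsingleton.elim (IsLocalRing.closedPoint _) ⟨⊥, Ideal.isPrime_bot⟩

lemma Module.notMem_support_of_map_algebraMap_eq_bot {I : Ideal R} {p : PrimeSpectrum R}
    (h : I.map (algebraMap R (Localization.AtPrime p.asIdeal)) = ⊥) :
    p ∉ Module.support R I := by
  refine Module.notMem_support_iff'.mpr fun ⟨x, hx⟩ => ?_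
  obtain ⟨⟨s, hs⟩, hsx⟩ := (IsLocalization.map_eq_zero_iff p.asIdeal.primeCompl _ x).mp
    ((Ideal.map_eq_bot_iff_le_ker _).mp h hx)
  exact ⟨s, hs, Subtype.ext hsx⟩

lemma Module.supportDim_le_of_forall_mem_support (M : Type*) [AddCommGroup M] [Module R M]
    {n : WithBot ℕ∞} (h : ∀ p ∈ Module.support R M, ringKrullDim (R ⧸ p.asIdeal) ≤ n) :
    Module.supportDim R M ≤ n := by
  rw [Module.supportDim, Order.krullDim_eq_iSup_coheight]
  refine iSup_le fun p => ?_
  calc (Order.coheight p : WithBot ℕ∞)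
      ≤ Order.coheight (p : PrimeSpectrum R) := by
        exact_mod_cast
          Order.coheight_le_coheight_apply_of_strictMono Subtype.val (fun _ _ h => h) p
    _ = Order.krullDim (Set.Ici (p : PrimeSpectrum R)) := Order.coheight_eq_krullDim_Ici _
    _ = ringKrullDim (R ⧸ p.1.asIdeal) := by
        rw [ringKrullDim_quotient]; rfl
    _ ≤ n := h p p.2

namespace RegularInCodimOne

variable {d : ℕ} (hd : ringKrullDim R = d) (hR1 : RegularInCodimOne R d)
include hd hR1

lemma isDomain_localization (P : Ideal R) [P.IsPrime]
    (hP : ((d - 1 : ℕ) : WithBot ℕ∞) ≤ ringKrullDim (R ⧸ P)) :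
    IsDomain (Localization.AtPrime P) := by
  rcases WithBot.ENat.eq_or_eq_of_sub_one_le_of_le hP (hd ▸ ringKrullDim_quotient_le P)
    with h | h
  · exact (hR1.1 P h).isDomain
  · exact (hR1.2 P h).1

lemma ker_algebraMap_localization_mem_minimalPrimes_and_ringKrullDim_eq (P : Ideal R) [P.IsPrime]
    (hP : ((d - 1 : ℕ) : WithBot ℕ∞) ≤ ringKrullDim (R ⧸ P)) :
    RingHom.ker (algebraMap R (Localization.AtPrime P)) ∈ minimalPrimes R ∧
      ringKrullDim (R ⧸ RingHom.ker (algebraMap R (Localization.AtPrime P))) = d := by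
  have := hR1.isDomain_localization hd P hP
  set Q := RingHom.ker (algebraMap R (Localization.AtPrime P))
  have hQ : Q ∈ minimalPrimes R := ker_algebraMap_localization_mem_minimalPrimes P
  have : Q.IsPrime := hQ.isPrime
  have hQP : Q ≤ P := (Ideal.comap_mono bot_le).trans_eq
    (IsLocalization.AtPrime.under_maximalIdeal (Localization.AtPrime P) P)
  refine ⟨hQ, ?_⟩
  rcases WithBot.ENat.eq_or_eq_of_sub_one_le_of_le (hP.trans (ringKrullDim_quotient_anti hQP))
    (hd ▸ ringKrullDim_quotient_le Q) with h | h
  · exact h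
  · obtain ⟨_, hdvr⟩ := hR1.2 Q h
    exact absurd hdvr (not_isDiscreteValuationRing_localization_of_mem_minimalPrimes Q hQ)

end RegularInCodimOne

end

theorem intersection_of_top_dim_minimal_primes_small_general
    {R : Type} [CommRing R] [IsNoetherianRing R]
    (d : ℕ) (hd : ringKrullDim R = (d : ℕ)) (hR1 : RegularInCodimOne R d)
    (u : ℕ) (q : Fin u → Ideal R)
    (hq' : ∀ Q ∈ minimalPrimes R, ringKrullDim (R ⧸ Q) = (d : ℕ) → ∃ i, q i = Q) :
    (∀ (P : Ideal R) [P.IsPrime], ((d - 1 : ℕ) : WithBot ℕ∞) ≤ ringKrullDim (R ⧸ P) →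
      (⨅ i, q i).map (algebraMap R (Localization.AtPrime P)) = ⊥) ∧
    ringKrullDim (R ⧸ Module.annihilator R ↥(⨅ i, q i)) ≤ ((d - 2 : ℕ) : WithBot ℕ∞) := by
  have hlocal : ∀ (P : Ideal R) [P.IsPrime],
      ((d - 1 : ℕ) : WithBot ℕ∞) ≤ ringKrullDim (R ⧸ P) →
      (⨅ i, q i).map (algebraMap R (Localization.AtPrime P)) = ⊥ := by
    intro P _ hP
    obtain ⟨hmin, hdim⟩ :=
      hR1.ker_algebraMap_localization_mem_minimalPrimes_and_ringKrullDim_eq hd P hP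
    obtain ⟨i, hi⟩ := hq' _ hmin hdim
    exact (Ideal.map_eq_bot_iff_le_ker _).mpr (hi ▸ iInf_le q i)
  refine ⟨hlocal, ?_⟩
  rw [← Module.supportDim_eq_ringKrullDim_quotient_annihilator]
  refine Module.supportDim_le_of_forall_mem_support _ fun p hp => ?_
  by_contra h
  exact Module.notMem_support_of_map_algebraMap_eq_bot
    (hlocal _ (WithBot.ENat.sub_one_le_of_not_le_sub_two h)) hp

/-- Let `(R, m)` be a Noetherian local ring of Krull dimension `d`
satisfying (R1′), and let `q_1, …, q_u` be the minimal primes of `R` with `dim R/q_i = d`.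
Then for every prime `P` with `dim R/P ≥ d - 1` the localization `(q_1 ∩ ⋯ ∩ q_u)_P` is
zero; consequently the module `q_1 ∩ ⋯ ∩ q_u` has Krull dimension at most `d - 2`. -/
theorem intersection_of_top_dim_minimal_primes_small
    {R : Type} [CommRing R] [IsNoetherianRing R] [IsLocalRing R]
    (d : ℕ) (hd : ringKrullDim R = (d : ℕ)) (hR1 : RegularInCodimOne R d)
    (u : ℕ) (q : Fin u → Ideal R) (hinj : Function.Injective q)
    (hq : ∀ i, q i ∈ minimalPrimes R ∧ ringKrullDim (R ⧸ q i) = (d : ℕ))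
    (hq' : ∀ Q ∈ minimalPrimes R, ringKrullDim (R ⧸ Q) = (d : ℕ) → ∃ i, q i = Q) :
    (∀ (P : Ideal R) [P.IsPrime], ((d - 1 : ℕ) : WithBot ℕ∞) ≤ ringKrullDim (R ⧸ P) →
      (⨅ i, q i).map (algebraMap R (Localization.AtPrime P)) = ⊥) ∧
    ringKrullDim (R ⧸ Module.annihilator R ↥(⨅ i, q i)) ≤ ((d - 2 : ℕ) : WithBot ℕ∞) :=
  intersection_of_top_dim_minimal_primes_small_general d hd hR1 u q hq'
end
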